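/- Let $P$ be a probability measure on a compact set $\mathcal{X}^p$, $\Phi:\mathcal{X}^p\to\mathbb{R}^d$ bounded measurable with $A := \mathbb{E}_X\mathbb{E}_{X'}[\Phi(X')K(X',X)\Phi(X)^\top]$ invertible, and $K$ a symmetric positive semidefinite kernel on $\mathcal{X}^p\times\mathcal{X}^p$. Define $K_\delta(x,x') = K(x,x') - \mathbb{E}_X[\Phi(X)^\top K(x,X)]\, A^{-1}\, \mathbb{E}_{X'}[\Phi(X')K(x',X')]$. Then for any $m\ge 1$, coefficients $c_1,\dots,c_m\in\mathbb{R}$, and points $x_1,\dots,x_m\in\mathcal{X}^p$, the function $\widehat\delta(x) = \sum_{i=1}^m c_i K_\delta(x,x_i)$ satisfies $\mathbb{E}_X[\Phi(X)\widehat\delta(X)] = 0$. -/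

import Mathlib

open MeasureTheory Matrix

/-!
Write `e x = (∫ Φ(z)_l K(x,z) dP(z))_l`, so that `K_δ(x,x') = K(x,x') - e(x) ⬝ A⁻¹ e(x')`.
By Fubini, `E[Φ(X)_k e(X)_l] = A_{kl}`, and by symmetry of `K`, `E[Φ(X)_k K(X,x')] = e(x')_k`.
Hence `E[Φ(X)_k K_δ(X,x')] = e(x')_k - (A A⁻¹ e(x'))_k = 0` for every `x'`, and the claim
follows by linearity.
-/

section BoundedKernel

variable {X : Type*} [MeasurableSpace X] {P : Measure X}

theorem measurable_integral_mul_kernel [SFinite P] {g : X → ℝ} {K : X → X → ℝ}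
    (hg : Measurable g) (hK : Measurable fun p : X × X => K p.1 p.2) :
    Measurable fun x => ∫ z, g z * K x z ∂P :=
  ((hg.comp measurable_snd).mul hK).stronglyMeasurable.integral_prod_right'.measurable

theorem norm_integral_mul_kernel_le [IsFiniteMeasure P] {g : X → ℝ} {K : X → X → ℝ}
    {Cg CK : ℝ} (hg : ∀ z, ‖g z‖ ≤ Cg) (hK : ∀ x z, ‖K x z‖ ≤ CK) (x : X) :
    ‖∫ z, g z * K x z ∂P‖ ≤ Cg * CK * P.real Set.univ :=
  norm_integral_le_of_norm_le_const (ae_of_all _ fun z => norm_mul_le_of_le (hg z) (hK x z))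

theorem integral_mul_integral_mul_kernel_swap [IsFiniteMeasure P] {f g : X → ℝ}
    {K : X → X → ℝ} {Cf Cg CK : ℝ} (hf : Measurable f) (hfb : ∀ x, ‖f x‖ ≤ Cf)
    (hg : Measurable g) (hgb : ∀ x, ‖g x‖ ≤ Cg)
    (hK : Measurable fun p : X × X => K p.1 p.2) (hKb : ∀ x z, ‖K x z‖ ≤ CK) :
    ∫ x, f x * ∫ z, g z * K x z ∂P ∂P = ∫ z, (∫ x, f x * K x z ∂P) * g z ∂P := by
  have hint : Integrable (Function.uncurry fun x z => f x * K x z * g z) (P.prod P) :=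
    .of_bound (((hf.comp measurable_fst).mul hK).mul (hg.comp measurable_snd)).aestronglyMeasurable
      (Cf * CK * Cg) (ae_of_all _ fun p =>
        norm_mul_le_of_le (norm_mul_le_of_le (hfb p.1) (hKb p.1 p.2)) (hgb p.2))
  calc ∫ x, f x * ∫ z, g z * K x z ∂P ∂P = ∫ x, ∫ z, f x * K x z * g z ∂P ∂P := by
        simp_rw [← integral_const_mul, mul_comm (g _), mul_assoc]
    _ = ∫ z, ∫ x, f x * K x z * g z ∂P ∂P := integral_integral_swap hint
    _ = ∫ z, (∫ x, f x * K x z ∂P) * g z ∂P := by simp_rw [integral_mul_const]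

end BoundedKernel

section DotProduct

variable {X ι : Type*} [MeasurableSpace X] {P : Measure X} [Fintype ι]
  {f : X → ℝ} {u : X → ι → ℝ}

theorem integrable_mul_dotProduct_const (hu : ∀ i, Integrable (fun x => f x * u x i) P)
    (w : ι → ℝ) : Integrable (fun x => f x * (u x ⬝ᵥ w)) P := by
  simp_rw [dotProduct, Finset.mul_sum, ← mul_assoc]
  exact integrable_finsetSum _ fun i _ => (hu i).mul_const (w i)

theorem integral_mul_dotProduct_const (hu : ∀ i, Integrable (fun x => f x * u x i) P)
    (w : ι → ℝ) :
    ∫ x, f x * (u x ⬝ᵥ w) ∂P = (fun i => ∫ x, f x * u x i ∂P) ⬝ᵥ w := by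
  simp_rw [dotProduct, Finset.mul_sum, ← mul_assoc]
  rw [integral_finsetSum _ fun i _ => (hu i).mul_const (w i)]
  simp_rw [integral_mul_const]

end DotProduct

section ProjectedKernel

variable {X ι : Type*} [MeasurableSpace X] {P : Measure X} [IsFiniteMeasure P]
  [Fintype ι] [DecidableEq ι] {Φ : X → ι → ℝ} {K : X → X → ℝ} {CΦ CK : ℝ}

theorem integrable_and_integral_mul_projectedKernel_eq_zero
    (hΦ : Measurable Φ) (hΦb : ∀ x i, ‖Φ x i‖ ≤ CΦ)
    (hK : Measurable fun p : X × X => K p.1 p.2) (hKb : ∀ x z, ‖K x z‖ ≤ CK)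
    (hKsymm : ∀ x x', K x x' = K x' x) {A : Matrix ι ι ℝ}
    (hA : ∀ k l, A k l = ∫ x, (∫ x', Φ x' k * K x' x ∂P) * Φ x l ∂P)
    (hAinv : IsUnit A.det) {Kδ : X → X → ℝ}
    (hKδ : ∀ x x', Kδ x x' = K x x' -
      ∑ k, ∑ l, (∫ z, Φ z k * K x z ∂P) * A⁻¹ k l * (∫ z, Φ z l * K x' z ∂P))
    (x' : X) (k : ι) :
    Integrable (fun x => Φ x k * Kδ x x') P ∧ ∫ x, Φ x k * Kδ x x' ∂P = 0 := by
  set e : X → ι → ℝ := fun x l => ∫ z, Φ z l * K x z ∂P with he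
  have hΦi : ∀ i, Measurable fun x => Φ x i := fun i => (measurable_pi_apply i).comp hΦ
  have hΦe_int : ∀ l, Integrable (fun x => Φ x k * e x l) P := fun l =>
    .of_bound
      ((hΦi k).mul (measurable_integral_mul_kernel (hΦi l) hK)).aestronglyMeasurable _
      (ae_of_all _ fun x =>
        norm_mul_le_of_le (hΦb x k) (norm_integral_mul_kernel_le (hΦb · l) hKb x))
  have hΦK_int : Integrable (fun x => Φ x k * K x x') P :=
    .of_bound
      ((hΦi k).mul (hK.comp (measurable_id.prodMk measurable_const))).aestronglyMeasurable _
      (ae_of_all _ fun x => norm_mul_le_of_le (hΦb x k) (hKb x x'))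
  have hΦe : (fun l => ∫ x, Φ x k * e x l ∂P) = A k := funext fun l => by
    rw [hA, integral_mul_integral_mul_kernel_swap (hΦi k) (hΦb · k) (hΦi l) (hΦb · l) hK hKb]
  have hΦK : ∫ x, Φ x k * K x x' ∂P = e x' k := by
    simp only [he, hKsymm _ x']
  have hfun : (fun x => Φ x k * Kδ x x') =
      fun x => Φ x k * K x x' - Φ x k * (e x ⬝ᵥ (A⁻¹ *ᵥ e x')) := by
    funext x
    simp only [hKδ, he, mul_sub, dotProduct, mulVec, Finset.mul_sum, mul_assoc]
  refine ⟨hfun ▸ hΦK_int.sub (integrable_mul_dotProduct_const hΦe_int _), ?_⟩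
  calc ∫ x, Φ x k * Kδ x x' ∂P = e x' k - (A *ᵥ (A⁻¹ *ᵥ e x')) k := by
        rw [hfun, integral_sub hΦK_int (integrable_mul_dotProduct_const hΦe_int _),
          integral_mul_dotProduct_const hΦe_int, hΦe, hΦK]
        rfl
    _ = 0 := by rw [mulVec_mulVec, mul_nonsing_inv _ hAinv, one_mulVec, sub_self]

end ProjectedKernel

theorem projected_kernel_orthogonal_general
    {X : Type*} [MeasurableSpace X]
    (P : Measure X) [IsProbabilityMeasure P]
    {d : ℕ} (Φ : X → Fin d → ℝ) (hΦmeas : Measurable Φ)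
    (hΦbd : ∃ C : ℝ, ∀ x, ‖Φ x‖ ≤ C)
    (K : X → X → ℝ) (hKmeas : Measurable fun p : X × X => K p.1 p.2)
    (hKbd : ∃ C : ℝ, ∀ x x', |K x x'| ≤ C)
    (hKsymm : ∀ x x', K x x' = K x' x)
    (A : Matrix (Fin d) (Fin d) ℝ)
    (hA : ∀ k l, A k l = ∫ x, (∫ x', Φ x' k * K x' x ∂P) * Φ x l ∂P)
    (hAinv : IsUnit A.det)
    (Kδ : X → X → ℝ)
    (hKδ : ∀ x x', Kδ x x' = K x x' -
      ∑ k, ∑ l, (∫ z, Φ z k * K x z ∂P) * A⁻¹ k l * (∫ z, Φ z l * K x' z ∂P)) :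
    ∀ (m : ℕ) (c : Fin m → ℝ) (xs : Fin m → X) (k : Fin d),
      ∫ x, Φ x k * (∑ i, c i * Kδ x (xs i)) ∂P = 0 := by
  intro m c xs k
  obtain ⟨CΦ, hCΦ⟩ := hΦbd
  obtain ⟨CK, hCK⟩ := hKbd
  have hslice := fun x' => integrable_and_integral_mul_projectedKernel_eq_zero hΦmeas
    (fun x i => (norm_le_pi_norm (Φ x) i).trans (hCΦ x)) hKmeas
    (fun x z => (Real.norm_eq_abs _).trans_le (hCK x z)) hKsymm hA hAinv hKδ x' k
  simp_rw [Finset.mul_sum, mul_left_comm (Φ _ k) (c _)]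
  rw [integral_finsetSum _ fun i _ => (hslice (xs i)).1.const_mul (c i)]
  simp [integral_const_mul, (hslice _).2]

/-- Decomposition orthogonality of the projected kernel. With
`A = E_X E_{X'}[Φ(X') K(X',X) Φ(X)ᵀ]` invertible and
`K_δ(x,x') = K(x,x') - E_X[Φ(X)ᵀ K(x,X)] A⁻¹ E_{X'}[Φ(X') K(x',X')]`,
every finite expansion `δ̂(x) = ∑ c_i K_δ(x, x_i)` satisfies `E_X[Φ(X) δ̂(X)] = 0`. -/
theorem projected_kernel_orthogonal
    {X : Type*} [MeasurableSpace X] [TopologicalSpace X] [CompactSpace X]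
    (P : Measure X) [IsProbabilityMeasure P]
    {d : ℕ} (Φ : X → Fin d → ℝ) (hΦmeas : Measurable Φ)
    (hΦbd : ∃ C : ℝ, ∀ x, ‖Φ x‖ ≤ C)
    (K : X → X → ℝ) (hKmeas : Measurable fun p : X × X => K p.1 p.2)
    (hKbd : ∃ C : ℝ, ∀ x x', |K x x'| ≤ C)
    (hKsymm : ∀ x x', K x x' = K x' x)
    (hKpsd : ∀ (n : ℕ) (c : Fin n → ℝ) (xs : Fin n → X),
      0 ≤ ∑ i, ∑ j, c i * c j * K (xs i) (xs j))
    (A : Matrix (Fin d) (Fin d) ℝ)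
    (hA : ∀ k l, A k l = ∫ x, (∫ x', Φ x' k * K x' x ∂P) * Φ x l ∂P)
    (hAinv : IsUnit A.det)
    (Kδ : X → X → ℝ)
    (hKδ : ∀ x x', Kδ x x' = K x x' -
      ∑ k, ∑ l, (∫ z, Φ z k * K x z ∂P) * A⁻¹ k l * (∫ z, Φ z l * K x' z ∂P)) :
    ∀ (m : ℕ) (c : Fin m → ℝ) (xs : Fin m → X) (k : Fin d),
      ∫ x, Φ x k * (∑ i, c i * Kδ x (xs i)) ∂P = 0 :=
  projected_kernel_orthogonal_general P Φ hΦmeas hΦbd K hKmeas hKbd hKsymm A hA hAinv Kδ hKδ
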